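/- Let M^O, M^L, M^R be d×d complex matrices with M^R M^L = 0, and suppose there exists a d×d complex matrix X such that [X, M^O] = F^O, M^O [X, M^L] = M^O F^L, M^L [X, M^L] = M^L F^L, [X, M^R] M^O = F^R M^O, and [X, M^R] M^R = F^R M^R. Then for every n ≥ 2 and every Fibonacci-allowed cyclic word s : ZMod n → {O, L, R}, the sum of all cyclic insertion amplitudes vanishes: Σ_{k ∈ ZMod n} Tr(F^{s_k} · M^{s_{k+1}} · M^{s_{k+2}} ⋯ M^{s_{k+n−1}}) = 0. -/
import Mathlib

open Matrix

/-- The blocked three-letter alphabet `{O, L, R}`. -/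
inductive Blk | O | L | R
deriving DecidableEq

/-- The defect matrices: `F^O = M^L + M^R`, `F^L = F^R = M^O`. -/
def Fdef {d : ℕ} (M : Blk → Matrix (Fin d) (Fin d) ℂ) : Blk → Matrix (Fin d) (Fin d) ℂ
  | .O => M .L + M .R
  | .L => M .O
  | .R => M .O

section Aux

variable {d l : ℕ} (M : Blk → Matrix (Fin d) (Fin d) ℂ) (s : ZMod (l + 2) → Blk)

/-- Product of letters `s (k+1), …, s (k+(l+1))`. -/
noncomputable def Pw (k : ZMod (l + 2)) : Matrix (Fin d) (Fin d) ℂ :=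
  (List.ofFn fun j : Fin (l + 1) => M (s (k + 1 + ((j : ℕ) : ZMod (l + 2))))).prod

/-- Full cyclic product starting at `k`. -/
noncomputable def Cw (k : ZMod (l + 2)) : Matrix (Fin d) (Fin d) ℂ :=
  (List.ofFn fun j : Fin (l + 2) => M (s (k + ((j : ℕ) : ZMod (l + 2))))).prod

lemma castl : ((l : ℕ) : ZMod (l + 2)) = -2 := by
  have h := ZMod.natCast_self (l + 2)
  push_cast at h
  linear_combination h

lemma Cw_head (k : ZMod (l + 2)) : Cw M s k = M (s k) * Pw M s k := by
  rw [Cw, Pw, List.ofFn_succ, List.prod_cons]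
  have e0 : k + ((((0 : Fin (l + 2)) : ℕ)) : ZMod (l + 2)) = k := by
    norm_num
  rw [e0]
  refine congrArg _ (congrArg List.prod (congrArg List.ofFn (funext fun i => ?_)))
  have : k + (((i.succ : ℕ)) : ZMod (l + 2)) = k + 1 + ((i : ℕ) : ZMod (l + 2)) := by
    push_cast [Fin.val_succ]
    ring
  rw [this]

lemma Cw_succ (k : ZMod (l + 2)) : Cw M s (k + 1) = Pw M s k * M (s k) := by
  rw [Cw, Pw, List.ofFn_succ', List.concat_eq_append, List.prod_append, List.prod_cons,
    List.prod_nil, mul_one]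
  have hlast : k + 1 + (((Fin.last (l + 1) : ℕ)) : ZMod (l + 2)) = k := by
    rw [Fin.val_last]
    push_cast [castl (l := l)]
    ring
  rw [hlast]
  refine congrArg (· * M (s k)) (congrArg List.prod (congrArg List.ofFn (funext fun i => ?_)))
  rw [Fin.coe_castSucc]

lemma Pw_concat (k : ZMod (l + 2)) :
    Pw M s k =
      (List.ofFn fun j : Fin l => M (s (k + 1 + ((j : ℕ) : ZMod (l + 2))))).prod *
        M (s (k - 1)) := by
  rw [Pw, List.ofFn_succ', List.concat_eq_append, List.prod_append, List.prod_cons,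
    List.prod_nil, mul_one]
  have hlast : k + 1 + (((Fin.last l : ℕ)) : ZMod (l + 2)) = k - 1 := by
    rw [Fin.val_last]
    rw [castl (l := l)]
    ring
  rw [hlast]
  refine congrArg (· * M (s (k - 1))) (congrArg List.prod (congrArg List.ofFn (funext fun i => ?_)))
  rw [Fin.coe_castSucc]

lemma Pw_cons (k : ZMod (l + 2)) :
    Pw M s k =
      M (s (k + 1)) *
        (List.ofFn fun j : Fin l => M (s (k + 2 + ((j : ℕ) : ZMod (l + 2))))).prod := by
  rw [Pw, List.ofFn_succ, List.prod_cons]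
  have e0 : k + 1 + ((((0 : Fin (l + 1)) : ℕ)) : ZMod (l + 2)) = k + 1 := by
    norm_num
  rw [e0]
  refine congrArg _ (congrArg List.prod (congrArg List.ofFn (funext fun i => ?_)))
  have : k + 1 + (((i.succ : ℕ)) : ZMod (l + 2)) = k + 2 + ((i : ℕ) : ZMod (l + 2)) := by
    push_cast [Fin.val_succ]
    ring
  rw [this]

end Aux

lemma tr_pad_left {d : ℕ} (B Q F D : Matrix (Fin d) (Fin d) ℂ) (h : B * F = B * D) :
    Matrix.trace (F * (Q * B)) = Matrix.trace (D * (Q * B)) := by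
  rw [← mul_assoc, trace_mul_cycle, h, trace_mul_cycle, trace_mul_cycle, mul_assoc]

lemma tr_pad_right {d : ℕ} (B Q F D : Matrix (Fin d) (Fin d) ℂ) (h : F * B = D * B) :
    Matrix.trace (F * (B * Q)) = Matrix.trace (D * (B * Q)) := by
  rw [← mul_assoc, ← mul_assoc, h]

/-- Theorem 3, PXP model: under the padded commutator
conditions, the sum of all cyclic insertion amplitudes vanishes for every
Fibonacci-allowed cyclic word. -/
theorem cyclic_insertion_sum_eq_zero_PXP
    (d : ℕ) (hd : 1 ≤ d)
    (M : Blk → Matrix (Fin d) (Fin d) ℂ)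
    (hRL : M .R * M .L = 0)
    (X : Matrix (Fin d) (Fin d) ℂ)
    (h1 : X * M .O - M .O * X = Fdef M .O)
    (h2 : M .O * (X * M .L - M .L * X) = M .O * Fdef M .L)
    (h3 : M .L * (X * M .L - M .L * X) = M .L * Fdef M .L)
    (h4 : (X * M .R - M .R * X) * M .O = Fdef M .R * M .O)
    (h5 : (X * M .R - M .R * X) * M .R = Fdef M .R * M .R)
    (n : ℕ) [NeZero n] (hn : 2 ≤ n)
    (s : ZMod n → Blk)
    (hfib : ¬ ∃ k : ZMod n, s k = Blk.R ∧ s (k + 1) = Blk.L) :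
    ∑ k : ZMod n,
      Matrix.trace (Fdef M (s k) *
        (List.ofFn fun j : Fin (n - 1) =>
          M (s (k + 1 + ((j : ℕ) : ZMod n)))).prod) = 0 := by
  push_neg at hfib
  obtain ⟨l, rfl⟩ : ∃ l, n = l + 2 := ⟨n - 2, by omega⟩
  show ∑ k : ZMod (l + 2), Matrix.trace (Fdef M (s k) * Pw M s k) = 0
  have tele : ∀ A P : Matrix (Fin d) (Fin d) ℂ,
      Matrix.trace ((X * A - A * X) * P)
        = Matrix.trace (X * (A * P)) - Matrix.trace (X * (P * A)) := by
    intro A P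
    rw [sub_mul, trace_sub, ← Matrix.trace_mul_cycle X P A, mul_assoc, mul_assoc]
  have key : ∀ k : ZMod (l + 2),
      Matrix.trace (Fdef M (s k) * Pw M s k)
        = Matrix.trace (X * Cw M s k) - Matrix.trace (X * Cw M s (k + 1)) := by
    intro k
    have step1 : Matrix.trace (Fdef M (s k) * Pw M s k)
        = Matrix.trace ((X * M (s k) - M (s k) * X) * Pw M s k) := by
      rcases hk : s k with _ | _ | _
      · rw [h1]
      · -- L case: use the left neighbor s (k-1) ≠ R
        have hprev : s (k - 1) ≠ Blk.R := by
          intro hR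
          have h' := hfib (k - 1) hR
          have e : k - 1 + 1 = k := by ring
          rw [e, hk] at h'
          exact h' rfl
        rw [Pw_concat]
        apply tr_pad_left
        rcases hp : s (k - 1) with _ | _ | _
        · exact h2.symm
        · exact h3.symm
        · exact absurd hp hprev
      · -- R case: use the right neighbor s (k+1) ≠ L
        have hnext : s (k + 1) ≠ Blk.L := hfib k hk
        rw [Pw_cons]
        apply tr_pad_right
        rcases hp : s (k + 1) with _ | _ | _
        · exact h4.symm
        · exact absurd hp hnext
        · exact h5.symm
    rw [step1, tele, Cw_head, Cw_succ]
  rw [Finset.sum_congr rfl (fun k _ => key k), Finset.sum_sub_distrib, sub_eq_zero]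
  exact (Fintype.sum_equiv (Equiv.addRight (1 : ZMod (l + 2))) _ _ (fun k => rfl)).symm
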